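/- arXiv:0904.3624 — 3 statements merged into one kernel-verified Lean document; each statement's English description precedes it below -/
import Mathlib

section
/- Let B be a commutative ring and I ⊂ B an ideal generated by a regular sequence of length r. Then the associated graded ring gr_I(B) = ⊕_{n≥0} Iⁿ/Iⁿ⁺¹ is isomorphic as a graded (B/I)-algebra to the polynomial ring (B/I)[T₁,…,Tᵣ]; in particular each Iⁿ/Iⁿ⁺¹ is a free B/I-module of rank equal to the number of monomials of degree n in r variables. -/
/-!
A regular sequence `x = (x', y)` is quasi-regular: a degree-`n` form `F` vanishing at `x` has all
its coefficients in `I = (x)`. By induction on the length, with `I' = (x')`, write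
`F = G(T') + T_last H`. Quasi-regularity of `x'` and regularity of `y` on `B/I'` make `y` regular on
every `B/I'^k`, so `y H(x) = -G(x') ∈ I'^(n+1)` forces `H(x) ∈ I'^(n+1) ⊆ I^(n+1)`; by induction on
`n` the coefficients of `H` lie in `I`. Writing `H(x) = K(x')`, the form `G + y K` vanishes at `x'`,
so the coefficients of `G` lie in `I` as well.

Evaluation at `x` maps degree-`n` forms onto `Iⁿ`, and the preimage of `Iⁿ⁺¹` is `I • ⊤` plus the
kernel; quasi-regularity kills the kernel, so `Iⁿ/Iⁿ⁺¹` is the module of forms reduced mod `I`.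
-/

theorem Finsupp.mem_ideal_smul_top_iff {R ι : Type*} [CommRing R] (I : Ideal R) (c : ι →₀ R) :
    c ∈ I • (⊤ : Submodule R (ι →₀ R)) ↔ ∀ i, c i ∈ I := by
  rw [← submodule_top, ← submodule_smul, mem_submodule_iff, smul_eq_mul, Ideal.mul_top]

namespace AssociatedGraded

open Finsupp Submodule RingTheory.Sequence

variable {σ τ B : Type*} [CommRing B]

/-- A finsupp on `Exponents σ n` is a degree-`n` form in variables indexed by `σ`. -/
abbrev Exponents (σ : Type*) (n : ℕ) : Type _ := {d : σ →₀ ℕ // d.degree = n}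

instance : Unique (Exponents σ 0) where
  default := ⟨0, map_zero _⟩
  uniq d := Subtype.ext ((degree_eq_zero_iff d.1).1 d.2)

noncomputable def evalForm (x : σ → B) (n : ℕ) : (Exponents σ n →₀ B) →ₗ[B] B :=
  linearCombination B fun d => d.1.prod fun i k => x i ^ k

lemma evalForm_single (x : σ → B) {n : ℕ} (d : Exponents σ n) (b : B) :
    evalForm x n (single d b) = b * d.1.prod fun i k => x i ^ k := by
  simp [evalForm]

lemma prod_pow_add_single (x : σ → B) (d : σ →₀ ℕ) (i : σ) :
    ((d + single i 1).prod fun j k => x j ^ k) = (d.prod fun j k => x j ^ k) * x i := by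
  rw [prod_add_index' (fun _ => pow_zero _) (fun _ _ _ => pow_add _ _ _),
    prod_single_index (h := fun j k => x j ^ k) (pow_zero _), pow_one]

lemma prod_pow_mem_span_pow (x : σ → B) (d : σ →₀ ℕ) :
    (d.prod fun i k => x i ^ k) ∈ Ideal.span (Set.range x) ^ d.degree := by
  induction d using Finsupp.induction_linear with
  | zero => simp
  | add d e hd he =>
    rw [prod_add_index' (fun _ => pow_zero _) (fun _ _ _ => pow_add _ _ _), map_add, pow_add]
    exact Ideal.mul_mem_mul hd he
  | single i k =>
    rw [prod_single_index (h := fun j k => x j ^ k) (pow_zero _), degree_single]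
    exact Ideal.pow_mem_pow (Ideal.subset_span (Set.mem_range_self i)) k

lemma evalForm_zero_apply (x : σ → B) (F : Exponents σ 0 →₀ B) : evalForm x 0 F = F default := by
  rw [unique_single F, evalForm_single, single_eq_same]
  exact (congrArg (F default * ·) prod_zero_index).trans (mul_one _)

lemma ker_evalForm_zero (x : σ → B) : LinearMap.ker (evalForm x 0) = ⊥ :=
  LinearMap.ker_eq_bot'.2 fun F hF =>
    (unique_single F).trans (by rw [← evalForm_zero_apply x, hF, single_zero])

lemma range_evalForm (x : σ → B) (n : ℕ) :
    LinearMap.range (evalForm x n) = Ideal.span (Set.range x) ^ n := by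
  induction n with
  | zero =>
    rw [pow_zero, Ideal.one_eq_top, eq_top_iff']
    exact fun b => ⟨single default b, by rw [evalForm_zero_apply, single_eq_same]⟩
  | succ n ih =>
    refine le_antisymm ?_ ?_
    · rw [evalForm, range_linearCombination, span_le]
      rintro _ ⟨d, rfl⟩
      simpa [d.2] using prod_pow_mem_span_pow x d.1
    · simp only [pow_succ', ← ih, evalForm, range_linearCombination]
      rw [Ideal.submodule_span_eq, Ideal.span_mul_span', ← Ideal.submodule_span_eq, span_le]
      rintro _ ⟨_, ⟨i, rfl⟩, _, ⟨d, rfl⟩, rfl⟩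
      refine subset_span ⟨⟨d.1 + single i 1, by rw [map_add, d.2, degree_single]⟩, ?_⟩
      exact (prod_pow_add_single x d.1 i).trans (mul_comm _ _)

lemma map_evalForm_smul_top (x : σ → B) (n : ℕ) :
    (Ideal.span (Set.range x) • ⊤ : Submodule B (Exponents σ n →₀ B)).map (evalForm x n) =
      Ideal.span (Set.range x) ^ (n + 1) := by
  rw [Submodule.map_smul'', ← LinearMap.range_eq_map, range_evalForm, pow_succ', smul_eq_mul]

lemma comap_evalForm_pow_succ (x : σ → B) (n : ℕ) :
    Submodule.comap (evalForm x n) (Ideal.span (Set.range x) ^ (n + 1)) =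
      Ideal.span (Set.range x) • ⊤ ⊔ LinearMap.ker (evalForm x n) := by
  rw [← map_evalForm_smul_top, comap_map_eq]

noncomputable def renameForm (f : σ → τ) (n : ℕ) :
    (Exponents σ n →₀ B) →ₗ[B] (Exponents τ n →₀ B) :=
  lmapDomain B B fun d => ⟨d.1.mapDomain f, by rw [degree_mapDomain, d.2]⟩

noncomputable def mulX (i : σ) (n : ℕ) : (Exponents σ n →₀ B) →ₗ[B] (Exponents σ (n + 1) →₀ B) :=
  lmapDomain B B fun d => ⟨d.1 + single i 1, by rw [map_add, d.2, degree_single]⟩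

lemma evalForm_renameForm (x : τ → B) (f : σ → τ) {n : ℕ} (F : Exponents σ n →₀ B) :
    evalForm x n (renameForm f n F) = evalForm (x ∘ f) n F := by
  induction F using Finsupp.induction_linear with
  | zero => simp
  | add F G hF hG => simp only [map_add, hF, hG]
  | single d b =>
    simp [renameForm, evalForm_single, prod_mapDomain_index (h := fun j k => x j ^ k)
      (fun _ => pow_zero _) (fun _ _ _ => pow_add _ _ _)]

lemma evalForm_mulX (x : σ → B) (i : σ) {n : ℕ} (F : Exponents σ n →₀ B) :
    evalForm x (n + 1) (mulX i n F) = x i * evalForm x n F := by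
  induction F using Finsupp.induction_linear with
  | zero => simp
  | add F G hF hG => simp only [map_add, hF, hG, mul_add]
  | single d b =>
    simp only [mulX, lmapDomain_apply, mapDomain_single, evalForm_single, prod_pow_add_single]
    ring

lemma range_renameForm_sup_range_mulX (r n : ℕ) :
    LinearMap.range (renameForm (B := B) Fin.castSucc (n + 1)) ⊔
      LinearMap.range (mulX (Fin.last r) n) = ⊤ := by
  refine eq_top_iff'.2 fun F => ?_
  induction F using Finsupp.induction_linear with
  | zero => exact zero_mem _
  | add F G hF hG => exact add_mem hF hG
  | single d b =>
    by_cases hd : d.1 (Fin.last r) = 0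
    · obtain ⟨e, he⟩ := (mem_range_mapDomain_iff _ (Fin.castSucc_injective r) d.1).2 fun i hi => by
        obtain ⟨i, rfl⟩ | rfl := Fin.eq_castSucc_or_eq_last i
        exacts [absurd (Set.mem_range_self i) hi, hd]
      refine mem_sup_left ⟨single ⟨e, by rw [← degree_mapDomain Fin.castSucc, he, d.2]⟩ b, ?_⟩
      simp only [renameForm, lmapDomain_apply, mapDomain_single]
      exact congrArg (single · b) (Subtype.ext he)
    · have hle : single (Fin.last r) 1 ≤ d.1 := single_le_iff.2 (Nat.one_le_iff_ne_zero.2 hd)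
      have hdeg : (d.1 - single (Fin.last r) 1).degree = n := by
        have := d.2
        rw [← tsub_add_cancel_of_le hle, map_add, degree_single] at this
        omega
      refine mem_sup_right ⟨single ⟨_, hdeg⟩ b, ?_⟩
      simp only [mulX, lmapDomain_apply, mapDomain_single]
      exact congrArg (single · b) (Subtype.ext (tsub_add_cancel_of_le hle))

/-- Equivalent, by `comap_evalForm_pow_succ`, to the usual condition that `F(x) ∈ Iⁿ⁺¹` forces the
coefficients of `F` into `I`. -/
def IsQuasiRegular (x : σ → B) : Prop :=
  ∀ n, LinearMap.ker (evalForm x n) ≤ Ideal.span (Set.range x) • ⊤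

lemma IsQuasiRegular.comap_evalForm_pow_succ {x : σ → B} (hx : IsQuasiRegular x) (n : ℕ) :
    Submodule.comap (evalForm x n) (Ideal.span (Set.range x) ^ (n + 1)) =
      Ideal.span (Set.range x) • ⊤ := by
  rw [AssociatedGraded.comap_evalForm_pow_succ, sup_eq_left.2 (hx n)]

lemma isQuasiRegular_of_isEmpty [IsEmpty σ] (x : σ → B) : IsQuasiRegular x := by
  rintro (_ | n)
  · simp [ker_evalForm_zero]
  · have : IsEmpty (Exponents σ (n + 1)) :=
      ⟨fun d => by simpa [Subsingleton.elim d.1 0] using d.2⟩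
    exact fun F _ => Subsingleton.elim F 0 ▸ zero_mem _

lemma IsQuasiRegular.mem_pow_of_mul_mem_pow {x : σ → B} (hx : IsQuasiRegular x) {y : B}
    (hy : IsSMulRegular (B ⧸ Ideal.span (Set.range x)) y) {k : ℕ} {b : B}
    (hb : y * b ∈ Ideal.span (Set.range x) ^ k) : b ∈ Ideal.span (Set.range x) ^ k := by
  induction k generalizing b with
  | zero => simp
  | succ k ih =>
    obtain ⟨G, rfl⟩ : b ∈ LinearMap.range (evalForm x k) := by
      rw [range_evalForm]
      exact ih (Ideal.pow_le_pow_right k.le_succ hb)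
    have hyG : y • G ∈ Ideal.span (Set.range x) • (⊤ : Submodule B (Exponents σ k →₀ B)) := by
      rw [← hx.comap_evalForm_pow_succ, mem_comap, map_smul, smul_eq_mul]
      exact hb
    rw [← map_evalForm_smul_top]
    refine mem_map_of_mem ((mem_ideal_smul_top_iff _ _).2 fun d => ?_)
    exact mem_of_isSMulRegular_quotient_of_smul_mem hy ((mem_ideal_smul_top_iff _ _).1 hyG d)

theorem IsQuasiRegular.of_castSucc {r : ℕ} {x : Fin (r + 1) → B}
    (hx : IsQuasiRegular (x ∘ Fin.castSucc))
    (hy : IsSMulRegular (B ⧸ Ideal.span (Set.range (x ∘ Fin.castSucc))) (x (Fin.last r))) :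
    IsQuasiRegular x := by
  set I' := Ideal.span (Set.range (x ∘ Fin.castSucc))
  set I := Ideal.span (Set.range x)
  have hI' : I' ≤ I := Ideal.span_mono (Set.range_comp_subset_range _ _)
  have hyI : x (Fin.last r) ∈ I := Ideal.subset_span (Set.mem_range_self _)
  intro n
  induction n with
  | zero => simp [ker_evalForm_zero]
  | succ n ih =>
    intro F hF
    obtain ⟨_, ⟨G, rfl⟩, _, ⟨H, rfl⟩, rfl⟩ :=
      mem_sup.1 ((range_renameForm_sup_range_mulX (B := B) r n).ge (mem_top (x := F)))
    have hsum : evalForm (x ∘ Fin.castSucc) (n + 1) G + x (Fin.last r) * evalForm x n H = 0 := by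
      simpa [evalForm_renameForm, evalForm_mulX] using hF
    have hyH : x (Fin.last r) * evalForm x n H ∈ I' ^ (n + 1) := by
      rw [eq_neg_of_add_eq_zero_right hsum, ← range_evalForm]
      exact neg_mem (LinearMap.mem_range_self _ _)
    have hHpow : evalForm x n H ∈ I' ^ (n + 1) := hx.mem_pow_of_mul_mem_pow hy hyH
    obtain ⟨K, hK⟩ : evalForm x n H ∈ LinearMap.range (evalForm (x ∘ Fin.castSucc) (n + 1)) := by
      rwa [range_evalForm]
    have hH : H ∈ I • (⊤ : Submodule B (Exponents (Fin (r + 1)) n →₀ B)) :=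
      (AssociatedGraded.comap_evalForm_pow_succ x n).le.trans (sup_le le_rfl ih)
        (Ideal.pow_right_mono hI' _ hHpow)
    have hGK : G + x (Fin.last r) • K ∈ I' • (⊤ : Submodule B (Exponents (Fin r) (n + 1) →₀ B)) :=
      hx (n + 1) (by rw [LinearMap.mem_ker, map_add, map_smul, hK, smul_eq_mul, hsum])
    have hG : G ∈ I • (⊤ : Submodule B (Exponents (Fin r) (n + 1) →₀ B)) := by
      rw [← add_sub_cancel_right G (x (Fin.last r) • K)]
      exact sub_mem (smul_mono_left hI' hGK) (smul_mem_smul hyI mem_top)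
    exact add_mem (smul_top_le_comap_smul_top I _ hG) (smul_top_le_comap_smul_top I _ hH)

theorem isQuasiRegular_of_isWeaklyRegular :
    ∀ {r : ℕ} {x : Fin r → B}, IsWeaklyRegular B (List.ofFn x) → IsQuasiRegular x
  | 0, x, _ => isQuasiRegular_of_isEmpty x
  | r + 1, x, hx => by
    have hofList : Ideal.ofList (List.ofFn fun i : Fin r => x i.castSucc) • ⊤ =
        (Ideal.span (Set.range fun i : Fin r => x i.castSucc) : Submodule B B) := by
      rw [smul_eq_mul, Ideal.mul_top, Ideal.ofList]
      exact congrArg _ (Set.ext fun a => List.mem_ofFn' _ a)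
    rw [List.ofFn_succ', List.concat_eq_append, isWeaklyRegular_append_iff,
      isWeaklyRegular_singleton_iff, hofList] at hx
    exact .of_castSucc (isQuasiRegular_of_isWeaklyRegular hx.1) hx.2

theorem IsQuasiRegular.nonempty_linearEquiv {x : σ → B} (hx : IsQuasiRegular x) (n : ℕ) :
    Nonempty ((↥(Ideal.span (Set.range x) ^ n) ⧸ Submodule.comap
        (Submodule.subtype (Ideal.span (Set.range x) ^ n)) (Ideal.span (Set.range x) ^ (n + 1)))
      ≃ₗ[B] (Exponents σ n →₀ B ⧸ Ideal.span (Set.range x))) := by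
  set I := Ideal.span (Set.range x)
  let ψ := (mkQ (comap (I ^ n).subtype (I ^ (n + 1)))).comp
    ((evalForm x n).codRestrict (I ^ n) fun F => range_evalForm x n ▸ LinearMap.mem_range_self _ F)
  let θ := mapRange.linearMap (α := Exponents σ n) I.mkQ
  have hψ : Function.Surjective ψ := (mkQ_surjective _).comp fun b => by
    obtain ⟨F, hF⟩ : (b : B) ∈ LinearMap.range (evalForm x n) := by rw [range_evalForm]; exact b.2
    exact ⟨F, Subtype.ext hF⟩
  have hθ : Function.Surjective θ := mapRange_surjective _ (map_zero _) I.mkQ_surjective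
  have hker : LinearMap.ker ψ = LinearMap.ker θ := by
    rw [LinearMap.ker_comp, ker_mkQ, ← comap_comp, LinearMap.subtype_comp_codRestrict,
      hx.comap_evalForm_pow_succ, ker_mapRange]
    ext F
    simp only [mem_ideal_smul_top_iff, mem_submodule_iff, ker_mkQ, I]
  exact ⟨(ψ.quotKerEquivOfSurjective hψ).symm ≪≫ₗ quotEquivOfEq _ _ hker ≪≫ₗ
    θ.quotKerEquivOfSurjective hθ⟩

end AssociatedGraded

/-- Let `B` be a commutative ring and `I ⊂ B` an ideal generated by a regular sequence
`x₁, …, xᵣ`.  Then the associated graded ring `gr_I(B) = ⊕ Iⁿ/Iⁿ⁺¹` is the polynomial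
ring `(B/I)[T₁, …, Tᵣ]`: in each degree `n`, the piece `Iⁿ/Iⁿ⁺¹` is linearly isomorphic
to the free `B/I`-module on the monomials of degree `n` in `r` variables (the `B`-module
structure on the latter being induced by `B → B/I`); in particular `Iⁿ/Iⁿ⁺¹` is a free
`B/I`-module of rank the number of degree-`n` monomials in `r` variables. -/
theorem associatedGraded_piece_free
    (B : Type*) [CommRing B] (r : ℕ) (x : Fin r → B)
    (hreg : RingTheory.Sequence.IsRegular B (List.ofFn x))
    (I : Ideal B) (hI : I = Ideal.span (Set.range x)) (n : ℕ) :
    Nonempty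
      ((↥(I ^ n) ⧸ Submodule.comap (Submodule.subtype (I ^ n)) (I ^ (n + 1)))
        ≃ₗ[B] ({d : Fin r →₀ ℕ // (d.sum fun _ m => m) = n} →₀ B ⧸ I)) := by
  subst hI
  exact (AssociatedGraded.isQuasiRegular_of_isWeaklyRegular
    hreg.toIsWeaklyRegular).nonempty_linearEquiv n
end

section
/- Let B = (W → S, I, b, E) be a basic object over artinian local A. If C and C' are irreducible B-permissible centers having a common point y with I(C)_y = I(C')_y, then C = C' as subschemes of W. -/
/-!
If `R ⧸ J` has a unique associated prime `q` and `J ≤ p`, then `q ≤ p`, because the minimal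
prime of `J` lying below `p` is associated. Hence every element outside `p` is a nonzerodivisor
on `R ⧸ J`, which says exactly that `J` is recovered from its localization at `p`. Two such
ideals with the same localization at a common prime `p` therefore coincide.
-/

namespace Ideal

variable {R : Type*} [CommRing R] [IsNoetherianRing R] {J p : Ideal R} [p.IsPrime]

theorem exists_mem_associatedPrimes_quotient_le (hJp : J ≤ p) :
    ∃ q ∈ associatedPrimes R (R ⧸ J), q ≤ p := by
  obtain ⟨q, hq, hqp⟩ := exists_minimalPrimes_le hJp
  refine ⟨q, ?_, hqp⟩
  apply Module.associatedPrimes.minimalPrimes_annihilator_subset_associatedPrimes R (R ⧸ J)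
  rwa [annihilator_quotient]

theorem comap_map_atPrime_eq_self_of_associatedPrimes_le
    (h : ∀ q ∈ associatedPrimes R (R ⧸ J), q ≤ p) :
    (J.map (algebraMap R (Localization.AtPrime p))).comap
      (algebraMap R (Localization.AtPrime p)) = J := by
  refine le_antisymm (fun x hx => ?_) le_comap_map
  obtain ⟨t, ht, htx⟩ :=
    (IsLocalization.algebraMap_mem_map_algebraMap_iff p.primeCompl _ J x).mp hx
  by_contra hxJ
  have ht_zero_divisor : t ∈ ⋃ q ∈ associatedPrimes R (R ⧸ J), (q : Set R) := by
    rw [biUnion_associatedPrimes_eq_zero_divisors]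
    refine ⟨Quotient.mk J x, ?_, ?_⟩
    · rwa [Ne, Quotient.eq_zero_iff_mem]
    · rwa [Algebra.smul_def, Quotient.algebraMap_eq, ← map_mul, Quotient.eq_zero_iff_mem]
  obtain ⟨q, hq, htq⟩ := Set.mem_iUnion₂.mp ht_zero_divisor
  exact ht (h q hq htq)

theorem comap_map_atPrime_eq_self_of_associatedPrimes_eq_singleton {q : Ideal R}
    (hq : associatedPrimes R (R ⧸ J) = {q}) (hJp : J ≤ p) :
    (J.map (algebraMap R (Localization.AtPrime p))).comap
      (algebraMap R (Localization.AtPrime p)) = J := by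
  obtain ⟨q', hq', hq'p⟩ := exists_mem_associatedPrimes_quotient_le hJp
  rw [hq, Set.mem_singleton_iff] at hq'
  refine comap_map_atPrime_eq_self_of_associatedPrimes_le fun r hr => ?_
  rw [hq, Set.mem_singleton_iff] at hr
  exact hr ▸ hq' ▸ hq'p

end Ideal

theorem center_eq_center_of_stalk_eq_general
    (B : Type*) [CommRing B] [IsNoetherianRing B]
    (JC JC' : Ideal B)
    (hCirr : ∃ q : Ideal B, associatedPrimes B (B ⧸ JC) = {q})
    (hC'irr : ∃ q : Ideal B, associatedPrimes B (B ⧸ JC') = {q})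
    (p : Ideal B) [p.IsPrime] (hpC : JC ≤ p) (hpC' : JC' ≤ p)
    (hstalk : Ideal.map (algebraMap B (Localization.AtPrime p)) JC =
      Ideal.map (algebraMap B (Localization.AtPrime p)) JC') :
    JC = JC' := by
  obtain ⟨q, hq⟩ := hCirr
  obtain ⟨q', hq'⟩ := hC'irr
  rw [← Ideal.comap_map_atPrime_eq_self_of_associatedPrimes_eq_singleton hq hpC,
    ← Ideal.comap_map_atPrime_eq_self_of_associatedPrimes_eq_singleton hq' hpC', hstalk]

/-- Affine model of: if `C` and `C'` are irreducible `B`-permissible centers of a smooth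
`S`-scheme `W = Spec B` having a common point `y` (a prime `p` containing both defining
ideals) at which `I(C)_y = I(C')_y`, then `C = C'` as subschemes.  Here the defining
ideals `JC`, `JC'` are each generated by a regular sequence and each quotient is
irreducible Cohen–Macaulay without embedded points (exactly one associated prime); the
conclusion `C = C'` reads `JC = JC'`. -/
theorem center_eq_center_of_stalk_eq
    (B : Type*) [CommRing B] [IsNoetherianRing B]
    (JC JC' : Ideal B)
    (hC : ∃ (m : ℕ) (f : Fin m → B),
      RingTheory.Sequence.IsRegular B (List.ofFn f) ∧ JC = Ideal.span (Set.range f))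
    (hC' : ∃ (m : ℕ) (f : Fin m → B),
      RingTheory.Sequence.IsRegular B (List.ofFn f) ∧ JC' = Ideal.span (Set.range f))
    (hCirr : ∃ q : Ideal B, associatedPrimes B (B ⧸ JC) = {q})
    (hC'irr : ∃ q : Ideal B, associatedPrimes B (B ⧸ JC') = {q})
    (p : Ideal B) [p.IsPrime] (hpC : JC ≤ p) (hpC' : JC' ≤ p)
    (hstalk : Ideal.map (algebraMap B (Localization.AtPrime p)) JC =
      Ideal.map (algebraMap B (Localization.AtPrime p)) JC') :
    JC = JC' :=
  center_eq_center_of_stalk_eq_general B JC JC' hCirr hC'irr p hpC hpC' hstalk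
end

section
/- Let (I, b) be a weighted ideal on a scheme W smooth over S = Spec A (A artinian local, residue char 0), and define the homogenized ideal H(I/S, b) = I + Δ(I/S)·T + Δ²(I/S)·T² + ⋯ + Δ^{b−1}(I/S)·T^{b−1}, where T = Δ^{b−1}(I/S). Then Δ^{b−1}(I/S) = Δ^{b−1}(H(I/S,b)/S). -/
/-!
`Δ` is extensive, monotone, subadditive and obeys the Leibniz rule
`Δ(J·K) ⊆ Δ(J)·K + J·Δ(K)`; in particular `Δ(Tᵉ⁺¹) ⊆ Tᵉ`. Put `T = Δⁿ(I)`. Each application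
of `Δ` to `Δᵃ(I)·Tᵉ` either raises `a` or lowers `e`, so by induction
`Δʲ(Δᵃ(I)·Tᵉ) ⊆ T` whenever `a + j ≤ n + e`. With `n = b − 1` and `a = e = i` this bounds
`Δ^{b−1}` of every summand of `H(I/S, b)` by `T`, and `Δ^{b−1}` commutes with finite sums.
The reverse inclusion is `I ⊆ H(I/S, b)`.
-/

universe u

/-- The relative first derivative ideal `Δ(I/S)`: the ideal generated by `I` together
with all derivatives `D f` of elements `f ∈ I` by `A`-linear derivations. -/
def deltaRel (A B : Type u) [CommRing A] [CommRing B] [Algebra A B] (I : Ideal B) :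
    Ideal B :=
  I ⊔ Ideal.span {x : B | ∃ (D : Derivation A B B) (f : B), f ∈ I ∧ x = D f}

/-- The iterated relative derivative ideal `Δᵏ(I/S)`. -/
def deltaRelIter (A B : Type u) [CommRing A] [CommRing B] [Algebra A B] (k : ℕ)
    (I : Ideal B) : Ideal B :=
  (deltaRel A B)^[k] I

/-- The homogenized ideal of a weighted ideal `(I, b)` relative to `S`:
`H(I/S, b) = I + Δ(I/S)·T + ⋯ + Δ^{b−1}(I/S)·T^{b−1}` where `T = Δ^{b−1}(I/S)`. -/
def homogenizedIdeal (A B : Type u) [CommRing A] [CommRing B] [Algebra A B]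
    (I : Ideal B) (b : ℕ) : Ideal B :=
  ⨆ i ∈ Finset.range b, deltaRelIter A B i I * deltaRelIter A B (b - 1) I ^ i

section DeltaRel

variable {A B : Type u} [CommRing A] [CommRing B] [Algebra A B]

lemma le_deltaRel (I : Ideal B) : I ≤ deltaRel A B I := le_sup_left

lemma derivation_mem_deltaRel (D : Derivation A B B) {I : Ideal B} {f : B} (hf : f ∈ I) :
    D f ∈ deltaRel A B I :=
  le_sup_right (α := Ideal B) (Ideal.subset_span ⟨D, f, hf, rfl⟩)

lemma deltaRel_monotone : Monotone (deltaRel A B) := by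
  intro I J h
  refine sup_le_sup h (Ideal.span_mono ?_)
  rintro x ⟨D, f, hf, rfl⟩
  exact ⟨D, f, h hf, rfl⟩

lemma deltaRel_bot : deltaRel A B (⊥ : Ideal B) = ⊥ := by
  refine le_bot_iff.1 (sup_le le_rfl (Ideal.span_le.2 ?_))
  rintro x ⟨D, f, hf, rfl⟩
  simp [(Ideal.mem_bot.1 hf)]

lemma deltaRel_sup_le (I J : Ideal B) :
    deltaRel A B (I ⊔ J) ≤ deltaRel A B I ⊔ deltaRel A B J := by
  refine sup_le (sup_le_sup (le_deltaRel I) (le_deltaRel J)) (Ideal.span_le.2 ?_)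
  rintro x ⟨D, f, hf, rfl⟩
  obtain ⟨g, hg, h, hh, rfl⟩ := Submodule.mem_sup.1 hf
  rw [map_add]
  exact Submodule.add_mem_sup (derivation_mem_deltaRel D hg) (derivation_mem_deltaRel D hh)

lemma deltaRel_mul_le (I J : Ideal B) :
    deltaRel A B (I * J) ≤ deltaRel A B I * J ⊔ I * deltaRel A B J := by
  refine sup_le (le_sup_of_le_left (Ideal.mul_mono_left (le_deltaRel I))) (Ideal.span_le.2 ?_)
  rintro x ⟨D, f, hf, rfl⟩
  refine Submodule.mul_induction_on hf (fun a ha c hc => ?_) (fun x y hx hy => ?_)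
  · rw [Derivation.leibniz, smul_eq_mul, smul_eq_mul, add_comm, mul_comm c]
    exact Submodule.add_mem_sup (Ideal.mul_mem_mul (derivation_mem_deltaRel D ha) hc)
      (Ideal.mul_mem_mul ha (derivation_mem_deltaRel D hc))
  · rw [map_add]
    exact add_mem hx hy

lemma deltaRel_pow_succ_le (T : Ideal B) (e : ℕ) : deltaRel A B (T ^ (e + 1)) ≤ T ^ e := by
  induction e with
  | zero => simp
  | succ e ih =>
      rw [pow_succ' T (e + 1)]
      exact (deltaRel_mul_le _ _).trans
        (sup_le Ideal.mul_le_right ((Ideal.mul_mono_right ih).trans_eq (pow_succ' T e).symm))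

lemma deltaRel_mul_pow_le (J T : Ideal B) (e : ℕ) :
    deltaRel A B (J * T ^ e) ≤ deltaRel A B J * T ^ e ⊔ J * T ^ (e - 1) := by
  cases e with
  | zero => simp
  | succ e =>
      exact (deltaRel_mul_le _ _).trans
        (sup_le_sup_left (Ideal.mul_mono_right (deltaRel_pow_succ_le T e)) _)

lemma deltaRelIter_succ (k : ℕ) (I : Ideal B) :
    deltaRelIter A B (k + 1) I = deltaRelIter A B k (deltaRel A B I) :=
  Function.iterate_succ_apply _ _ _

lemma deltaRelIter_succ' (k : ℕ) (I : Ideal B) :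
    deltaRelIter A B (k + 1) I = deltaRel A B (deltaRelIter A B k I) :=
  Function.iterate_succ_apply' _ _ _

lemma deltaRelIter_mono (k : ℕ) : Monotone (deltaRelIter A B k) :=
  deltaRel_monotone.iterate k

lemma deltaRelIter_monotone (I : Ideal B) : Monotone fun k => deltaRelIter A B k I :=
  fun _ _ h => Function.monotone_iterate_of_id_le le_deltaRel h I

lemma deltaRelIter_sup_le (k : ℕ) (I J : Ideal B) :
    deltaRelIter A B k (I ⊔ J) ≤ deltaRelIter A B k I ⊔ deltaRelIter A B k J := by
  induction k with
  | zero => exact le_rfl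
  | succ k ih =>
      simp only [deltaRelIter_succ']
      exact (deltaRel_monotone ih).trans (deltaRel_sup_le _ _)

lemma deltaRelIter_biSup_le {ι : Type*} (k : ℕ) (s : Finset ι) (f : ι → Ideal B) :
    deltaRelIter A B k (⨆ i ∈ s, f i) ≤ ⨆ i ∈ s, deltaRelIter A B k (f i) := by
  classical
  induction s using Finset.induction with
  | empty => simp [deltaRelIter, Function.iterate_fixed deltaRel_bot]
  | insert a s _ ih =>
      simp only [Finset.iSup_insert]
      exact (deltaRelIter_sup_le _ _ _).trans (sup_le_sup_left ih _)

lemma deltaRelIter_mul_pow_le_of_le (I : Ideal B) {n a e : ℕ} (h : a ≤ n + e) :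
    deltaRelIter A B a I * deltaRelIter A B n I ^ e ≤ deltaRelIter A B n I := by
  rcases Nat.eq_zero_or_pos e with rfl | he
  · simpa using deltaRelIter_monotone I (by omega : a ≤ n)
  · exact Ideal.mul_le_right.trans (Ideal.pow_le_self he.ne')

lemma deltaRelIter_deltaRelIter_mul_pow_le (I : Ideal B) (n j : ℕ) {a e : ℕ}
    (h : a + j ≤ n + e) :
    deltaRelIter A B j (deltaRelIter A B a I * deltaRelIter A B n I ^ e) ≤
      deltaRelIter A B n I := by
  induction j generalizing a e with
  | zero => exact deltaRelIter_mul_pow_le_of_le I (by omega)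
  | succ j ih =>
      rw [deltaRelIter_succ]
      calc _ ≤ deltaRelIter A B j (deltaRelIter A B (a + 1) I * deltaRelIter A B n I ^ e ⊔
              deltaRelIter A B a I * deltaRelIter A B n I ^ (e - 1)) :=
            deltaRelIter_mono j (by
              simpa only [deltaRelIter_succ'] using deltaRel_mul_pow_le (deltaRelIter A B a I) _ e)
        _ ≤ deltaRelIter A B n I :=
            (deltaRelIter_sup_le _ _ _).trans (sup_le (ih (by omega)) (ih (by omega)))

lemma le_homogenizedIdeal (I : Ideal B) {b : ℕ} (hb : 0 < b) :
    I ≤ homogenizedIdeal A B I b :=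
  le_iSup₂_of_le 0 (Finset.mem_range.2 hb) (by simp [deltaRelIter])

end DeltaRel

theorem delta_homogenized_eq_general
    (A B : Type u) [CommRing A]
    [CommRing B] [Algebra A B]
    (I : Ideal B) (b : ℕ) (hb : 0 < b) :
    deltaRelIter A B (b - 1) I =
      deltaRelIter A B (b - 1) (homogenizedIdeal A B I b) := by
  refine le_antisymm (deltaRelIter_mono _ (le_homogenizedIdeal I hb)) ?_
  refine (deltaRelIter_biSup_le _ _ _).trans (iSup₂_le fun i hi => ?_)
  exact deltaRelIter_deltaRelIter_mul_pow_le I (b - 1) (b - 1) (by omega)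

/-- For a weighted ideal `(I, b)` on a scheme `W = Spec B` smooth over `S = Spec A`
(`A` artinian local with residue characteristic zero), homogenization does not change
the top derivative ideal: `Δ^{b−1}(I/S) = Δ^{b−1}(H(I/S, b)/S)`. -/
theorem delta_homogenized_eq
    (A B : Type u) [CommRing A] [IsArtinianRing A] [IsLocalRing A]
    [CharZero (IsLocalRing.ResidueField A)]
    [CommRing B] [Algebra A B] [Algebra.Smooth A B]
    (I : Ideal B) (b : ℕ) (hb : 0 < b) :
    deltaRelIter A B (b - 1) I =
      deltaRelIter A B (b - 1) (homogenizedIdeal A B I b) :=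
  delta_homogenized_eq_general A B I b hb
end
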